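/- For every even integer j ≥ 2 and real x with |x| < 1, ∫₀^π θ sin θ / (1 + x^j cos^j θ) dθ = π · ∑_{n=0}^∞ (−1)^n x^{jn}/(jn + 1). -/

import Mathlib

/-!
Reflecting `θ ↦ π - θ` fixes `sin θ` and, `j` being even, `cos θ ^ j`; averaging the integral
with its reflection replaces the weight `θ` by `π / 2`. The substitution `u = cos θ` then leaves
`∫ u in -1..1, (1 + x ^ j * u ^ j)⁻¹`, which is integrated termwise after expanding the
integrand as a geometric series (dominated by `∑ |x ^ j| ^ n`), using
`∫ u in -1..1, u ^ (j * n) = 2 / (j * n + 1)`.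
-/

open Real MeasureTheory intervalIntegral Set
open scoped Interval

theorem integral_mul_eq_half_mul_integral_of_symm {a : ℝ} {h : ℝ → ℝ}
    (hh : IntervalIntegrable h volume 0 a) (hsymm : ∀ θ, h (a - θ) = h θ) :
    ∫ θ in 0..a, θ * h θ = a / 2 * ∫ θ in 0..a, h θ := by
  have hreflect : ∫ θ in 0..a, (a - θ) * h θ = ∫ θ in 0..a, θ * h θ := by
    simpa only [hsymm, sub_self, sub_zero] using
      integral_comp_sub_left (fun θ => θ * h θ) a (a := 0) (b := a)
  have hsum :
      (∫ θ in 0..a, (a - θ) * h θ) + ∫ θ in 0..a, θ * h θ = a * ∫ θ in 0..a, h θ := by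
    rw [← integral_add (hh.continuousOn_mul (by fun_prop)) (hh.continuousOn_mul (by fun_prop)),
      ← intervalIntegral.integral_const_mul]
    congr 1 with θ
    ring
  rw [hreflect] at hsum
  linear_combination hsum / 2

theorem integral_sin_mul_comp_cos {g : ℝ → ℝ} (hg : ContinuousOn g (Icc (-1) 1)) :
    ∫ θ in 0..π, sin θ * g (cos θ) = ∫ u in -1..1, g u := by
  have hsubst := integral_comp_mul_deriv' (a := 0) (b := π) (f := cos) (f' := fun θ => -sin θ)
    (g := g) (fun θ _ => hasDerivAt_cos θ) (by fun_prop)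
    (hg.mono <| by rintro _ ⟨θ, -, rfl⟩; exact ⟨neg_one_le_cos θ, cos_le_one θ⟩)
  rw [cos_zero, cos_pi, integral_symm (-1) 1] at hsubst
  simpa only [mul_comm, Function.comp_apply, mul_neg, intervalIntegral.integral_neg, neg_inj]
    using hsubst

theorem integral_neg_one_one_pow_of_even {k : ℕ} (hk : Even k) :
    ∫ u in -1..1, u ^ k = 2 / (k + 1) := by
  rw [integral_pow, one_pow, hk.add_one.neg_one_pow]
  ring

theorem abs_mul_pow_lt_one {c u : ℝ} (hc : |c| < 1) (hu : |u| ≤ 1) (j : ℕ) :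
    |c * u ^ j| < 1 := by
  rw [abs_mul, abs_pow]
  calc |c| * |u| ^ j ≤ |c| :=
        mul_le_of_le_one_right (abs_nonneg c) (pow_le_one₀ (abs_nonneg u) hu)
    _ < 1 := hc

theorem continuousOn_inv_one_add_mul_pow {c : ℝ} (hc : |c| < 1) (j : ℕ) :
    ContinuousOn (fun u : ℝ => (1 + c * u ^ j)⁻¹) (Icc (-1) 1) := by
  refine ContinuousOn.inv₀ (by fun_prop) fun u hu => ?_
  have := abs_lt.1 (abs_mul_pow_lt_one hc (abs_le.2 hu) j)
  linarith

theorem hasSum_integral_neg_pow_mul_pow {c : ℝ} (hc : |c| < 1) (j : ℕ) :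
    HasSum (fun n : ℕ => ∫ u in -1..1, (-c) ^ n * u ^ (j * n))
      (∫ u in -1..1, (1 + c * u ^ j)⁻¹) := by
  have hIoc : ∀ u ∈ Ι (-1 : ℝ) 1, |u| ≤ 1 := fun u hu => by
    rw [uIoc_of_le (by norm_num)] at hu
    exact abs_le.2 ⟨hu.1.le, hu.2⟩
  refine hasSum_integral_of_dominated_convergence (fun n _ => |c| ^ n)
    (fun n => by fun_prop) (fun n => ae_of_all _ fun u hu => ?_)
    (ae_of_all _ fun _ _ => summable_geometric_of_lt_one (abs_nonneg c) hc)
    intervalIntegrable_const (ae_of_all _ fun u hu => ?_)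
  · rw [norm_mul, norm_pow, norm_neg, Real.norm_eq_abs, norm_pow, Real.norm_eq_abs]
    exact mul_le_of_le_one_right (by positivity) (pow_le_one₀ (abs_nonneg u) (hIoc u hu))
  · have hgeom := hasSum_geometric_of_abs_lt_one (r := -(c * u ^ j))
      (by rw [abs_neg]; exact abs_mul_pow_lt_one hc (hIoc u hu) j)
    rw [sub_neg_eq_add, ← neg_mul] at hgeom
    simpa only [mul_pow, ← pow_mul] using hgeom

theorem hasSum_integral_inv_one_add_mul_pow {c : ℝ} (hc : |c| < 1) {j : ℕ} (hj : Even j) :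
    HasSum (fun n : ℕ => (-c) ^ n * (2 / (j * n + 1)))
      (∫ u in -1..1, (1 + c * u ^ j)⁻¹) := by
  convert hasSum_integral_neg_pow_mul_pow hc j using 2 with n
  rw [intervalIntegral.integral_const_mul, integral_neg_one_one_pow_of_even (hj.mul_right n)]
  push_cast
  ring

theorem stmt_19 (j : ℕ) (hj : 2 ≤ j) (hje : Even j) (x : ℝ) (hx : |x| < 1) :
    ∫ θ in (0:ℝ)..Real.pi, θ * Real.sin θ / (1 + x ^ j * Real.cos θ ^ j)
      = Real.pi * ∑' n : ℕ, (-1 : ℝ) ^ n * x ^ (j * n) / (j * n + 1) := by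
  have hxj : |x ^ j| < 1 := by
    rw [abs_pow]; exact pow_lt_one₀ (abs_nonneg x) hx (by omega)
  set g : ℝ → ℝ := fun u => (1 + x ^ j * u ^ j)⁻¹
  have hg := continuousOn_inv_one_add_mul_pow hxj j
  have hsymm : ∀ θ, sin (π - θ) * g (cos (π - θ)) = sin θ * g (cos θ) := fun θ => by
    simp only [g, sin_pi_sub, cos_pi_sub, hje.neg_pow]
  have hint : IntervalIntegrable (fun θ => sin θ * g (cos θ)) volume 0 π :=
    (continuous_sin.mul (hg.comp_continuous continuous_cos fun θ =>
      ⟨neg_one_le_cos θ, cos_le_one θ⟩)).intervalIntegrable _ _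
  calc ∫ θ in 0..π, θ * sin θ / (1 + x ^ j * cos θ ^ j)
      = ∫ θ in 0..π, θ * (sin θ * g (cos θ)) := by
        congr 1 with θ; simp only [g]; ring
    _ = π / 2 * ∫ u in -1..1, g u := by
        rw [integral_mul_eq_half_mul_integral_of_symm hint hsymm, integral_sin_mul_comp_cos hg]
    _ = π * ∑' n : ℕ, (-1 : ℝ) ^ n * x ^ (j * n) / (j * n + 1) := by
        rw [← (hasSum_integral_inv_one_add_mul_pow hxj hje).tsum_eq, ← tsum_mul_left,
          ← tsum_mul_left]
        congr 1 with n
        rw [neg_pow, pow_mul]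
        ring
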